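/- arXiv:2412.21182 — 7 statements merged into one kernel-verified Lean document; each statement's English description precedes it below -/
import Mathlib

section
/- Let R be a ℤ-graded ring with a degree −1 derivation D. For a unit α of degree 0, the right logarithmic derivative δ = (Dα)·α⁻¹ satisfies D(δ) = δ². -/
/-- In a ℤ-graded ring with degree `-1` differential `D` satisfying the graded Leibniz
rule, the right logarithmic derivative `δ = (Dα)·α⁻¹` of a degree-0 unit `α` satisfies
`D(δ) = δ²`. -/
theorem right_log_deriv_eq_sq {R : Type*} [Ring R] (𝒜 : ℤ → AddSubgroup R)
    [GradedRing 𝒜] (D : R →+ R)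
    (hDdeg : ∀ (i : ℤ), ∀ x ∈ 𝒜 i, D x ∈ 𝒜 (i - 1))
    (hD2 : ∀ x : R, D (D x) = 0)
    (hLeib : ∀ (i : ℤ) (x y : R), x ∈ 𝒜 i →
      D (x * y) = D x * y + ((Int.negOnePow i : ℤˣ) : ℤ) • (x * D y))
    (α : Rˣ) (hα : (α : R) ∈ 𝒜 0) (hα' : ((α⁻¹ : Rˣ) : R) ∈ 𝒜 0) :
    D (D (α : R) * ((α⁻¹ : Rˣ) : R)) =
      (D (α : R) * ((α⁻¹ : Rˣ) : R)) * (D (α : R) * ((α⁻¹ : Rˣ) : R)) := by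
  have h1 : D 1 = 0 := by
    have := hLeib 0 1 1 (SetLike.one_mem_graded 𝒜)
    simp at this
    exact this
  have hunit : D ((α : R) * ((α⁻¹ : Rˣ) : R)) = 0 := by
    rw [Units.mul_inv, h1]
  have h2 : D (α : R) * ((α⁻¹ : Rˣ) : R) + (α : R) * D ((α⁻¹ : Rˣ) : R) = 0 := by
    have := hLeib 0 (α : R) ((α⁻¹ : Rˣ) : R) hα
    simp at this
    rw [h1] at this
    exact this.symm
  -- D(α⁻¹) = -α⁻¹ * Dα * α⁻¹
  have h3 : (α : R) * D ((α⁻¹ : Rˣ) : R) = -(D (α : R) * ((α⁻¹ : Rˣ) : R)) :=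
    eq_neg_of_add_eq_zero_right h2
  have hDinv : D ((α⁻¹ : Rˣ) : R) = -(((α⁻¹ : Rˣ) : R) * D (α : R) * ((α⁻¹ : Rˣ) : R)) := by
    calc D ((α⁻¹ : Rˣ) : R) = ((α⁻¹ : Rˣ) : R) * ((α : R) * D ((α⁻¹ : Rˣ) : R)) := by
          rw [← mul_assoc, Units.inv_mul, one_mul]
      _ = _ := by rw [h3]; rw [mul_neg, mul_assoc]
  have key := hLeib (-1) (D (α : R)) ((α⁻¹ : Rˣ) : R) (by
    have := hDdeg 0 (α : R) hα; simpa using this)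
  rw [hD2, zero_mul, zero_add] at key
  rw [key, hDinv]
  simp [Int.negOnePow_neg, mul_assoc]
end

section
/- (Basic Perturbation Lemma for chain complexes.) Let A, B be chain complexes of abelian groups and (f, g, h) a strong deformation retraction from A to B: f : A → B and g : B → A are chain maps, h : A → A is a degree +1 homomorphism, with fg = 1_B, dh + hd = 1_A − gf, fh = 0, hg = 0, hh = 0. Let δ : A → A be a degree −1 homomorphism with (d+δ)² = 0 such that 1 + δh is invertible as a graded endomorphism. Set f̂ = f(1+δh)⁻¹, ĝ = (1+hδ)⁻¹g, ĥ = h(1+δh)⁻¹, and δ' = f̂ δ g. Then (d_B + δ')² = 0 and (f̂, ĝ, ĥ) is a strong deformation retraction from (A, d_A + δ) to (B, d_B + δ'): f̂ and ĝ are chain maps for the perturbed differentials, f̂ĝ = 1_B, (d+δ)ĥ + ĥ(d+δ) = 1_A − ĝf̂, f̂ĥ = 0, ĥĝ = 0, ĥĥ = 0. -/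
/-
Everything happens in the endomorphism ring of `A`. Put `α = (1 + δh)⁻¹δ`; since
`δ(1 + hδ) = (1 + δh)δ`, also `α = δ(1 + hδ)⁻¹`, and `αh = 1 - (1 + δh)⁻¹`,
`hα = 1 - (1 + hδ)⁻¹`. Substituting these into `α(gf)α = α(1 - dh - hd)α` shows
`dα + αd + α(gf)α = (1 + δh)⁻¹((d + δ)² - d²)(1 + hδ)⁻¹ = 0`. This single identity,
composed with `f` on the left and `g` on the right, gives `(d_B + fαg)² = 0`; combined with
the homotopy relation it gives the chain-map identities for `f̂` and `ĝ`, and from those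
the perturbed homotopy formula follows. The side conditions `fh = 0`, `hg = 0`, `hh = 0`
survive because `(1 + δh)⁻¹h = h` and `h(1 + hδ)⁻¹ = h`.
-/

def homOfEnd {M : Type*} [AddCommGroup M] (f : AddMonoid.End M) : M →+ M := f

namespace Perturbation

variable {R : Type*} [Ring R] {d δ h p : R} {u v : Rˣ}

theorem semiconjBy_one_add_mul (a b : R) : SemiconjBy a (1 + b * a) (1 + a * b) := by
  simp only [SemiconjBy, mul_add, add_mul, mul_one, one_mul, mul_assoc]

theorem uinv_mul_δ (hu : (u : R) = 1 + δ * h) (hv : (v : R) = 1 + h * δ) :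
    ↑u⁻¹ * δ = δ * ↑v⁻¹ := by
  have : SemiconjBy δ v u := by rw [hu, hv]; exact semiconjBy_one_add_mul δ h
  exact this.units_inv_right.eq.symm

theorem h_mul_uinv (hu : (u : R) = 1 + δ * h) (hv : (v : R) = 1 + h * δ) :
    h * ↑u⁻¹ = ↑v⁻¹ * h := by
  have : SemiconjBy h u v := by rw [hu, hv]; exact semiconjBy_one_add_mul h δ
  exact this.units_inv_right.eq

theorem uinv_mul_h (hu : (u : R) = 1 + δ * h) (hh : h * h = 0) : ↑u⁻¹ * h = h := by
  rw [Units.inv_mul_eq_iff_eq_mul, hu, add_mul, one_mul, mul_assoc, hh, mul_zero, add_zero]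

theorem h_mul_vinv (hv : (v : R) = 1 + h * δ) (hh : h * h = 0) : h * ↑v⁻¹ = h := by
  rw [Units.mul_inv_eq_iff_eq_mul, hv, mul_add, mul_one, ← mul_assoc, hh, zero_mul, add_zero]

theorem uinv_mul_δ_mul_h (hu : (u : R) = 1 + δ * h) : ↑u⁻¹ * δ * h = 1 - ↑u⁻¹ := by
  rw [eq_sub_iff_add_eq', mul_assoc, ← mul_one_add, ← hu, Units.inv_mul]

theorem δ_mul_h_mul_uinv (hu : (u : R) = 1 + δ * h) : δ * h * ↑u⁻¹ = 1 - ↑u⁻¹ := by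
  rw [eq_sub_iff_add_eq', ← one_add_mul, ← hu, Units.mul_inv]

theorem h_mul_uinv_mul_δ (hu : (u : R) = 1 + δ * h) (hv : (v : R) = 1 + h * δ) :
    h * (↑u⁻¹ * δ) = 1 - ↑v⁻¹ := by
  rw [← mul_assoc, h_mul_uinv hu hv, eq_sub_iff_add_eq', mul_assoc, ← mul_one_add, ← hv,
    Units.inv_mul]

theorem transferred_perturbation_sq (hu : (u : R) = 1 + δ * h) (hv : (v : R) = 1 + h * δ)
    (hd : d * d = 0) (hdδ : (d + δ) * (d + δ) = 0) (hp : d * h + h * d = 1 - p) :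
    d * (↑u⁻¹ * δ) + ↑u⁻¹ * δ * d + ↑u⁻¹ * δ * p * (↑u⁻¹ * δ) = 0 := by
  obtain rfl : p = 1 - (d * h + h * d) := by rw [hp, sub_sub_cancel]
  calc d * (↑u⁻¹ * δ) + ↑u⁻¹ * δ * d + ↑u⁻¹ * δ * (1 - (d * h + h * d)) * (↑u⁻¹ * δ)
      = ↑u⁻¹ * δ * (↑u⁻¹ * δ) + ↑u⁻¹ * δ * d * (1 - h * (↑u⁻¹ * δ))
        + (1 - ↑u⁻¹ * δ * h) * d * (↑u⁻¹ * δ) := by noncomm_ring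
    _ = ↑u⁻¹ * δ * (↑u⁻¹ * δ) + ↑u⁻¹ * δ * d * ↑v⁻¹ + ↑u⁻¹ * d * (↑u⁻¹ * δ) := by
      rw [h_mul_uinv_mul_δ hu hv, uinv_mul_δ_mul_h hu, sub_sub_cancel, sub_sub_cancel]
    _ = ↑u⁻¹ * δ * (δ * ↑v⁻¹) + ↑u⁻¹ * δ * d * ↑v⁻¹ + ↑u⁻¹ * d * (δ * ↑v⁻¹) := by
      rw [← uinv_mul_δ hu hv]
    _ = ↑u⁻¹ * ((d + δ) * (d + δ) - d * d) * ↑v⁻¹ := by noncomm_ring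
    _ = 0 := by rw [hdδ, hd, sub_zero, mul_zero, zero_mul]

theorem uinv_mul_perturbed (hu : (u : R) = 1 + δ * h) (hv : (v : R) = 1 + h * δ)
    (hd : d * d = 0) (hdδ : (d + δ) * (d + δ) = 0) (hp : d * h + h * d = 1 - p) :
    ↑u⁻¹ * (d + δ) = d * ↑u⁻¹ + ↑u⁻¹ * δ * p * ↑u⁻¹ := by
  have hu' : (↑u⁻¹ : R) = 1 - ↑u⁻¹ * δ * h := by rw [uinv_mul_δ_mul_h hu, sub_sub_cancel]
  calc ↑u⁻¹ * (d + δ) = (1 - ↑u⁻¹ * δ * h) * d + ↑u⁻¹ * δ := by rw [mul_add, ← hu']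
    _ = d * (1 - ↑u⁻¹ * δ * h) + ↑u⁻¹ * δ * p * (1 - ↑u⁻¹ * δ * h)
        + (d * (↑u⁻¹ * δ) + ↑u⁻¹ * δ * d + ↑u⁻¹ * δ * p * (↑u⁻¹ * δ)) * h
        - ↑u⁻¹ * δ * (d * h + h * d - (1 - p)) := by noncomm_ring
    _ = d * ↑u⁻¹ + ↑u⁻¹ * δ * p * ↑u⁻¹ := by
      rw [transferred_perturbation_sq hu hv hd hdδ hp, hp, ← hu']; noncomm_ring

theorem perturbed_mul_vinv (hu : (u : R) = 1 + δ * h) (hv : (v : R) = 1 + h * δ)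
    (hd : d * d = 0) (hdδ : (d + δ) * (d + δ) = 0) (hp : d * h + h * d = 1 - p) :
    (d + δ) * ↑v⁻¹ = ↑v⁻¹ * d + ↑v⁻¹ * p * (↑u⁻¹ * δ) := by
  have hv' : (↑v⁻¹ : R) = 1 - h * (↑u⁻¹ * δ) := by rw [h_mul_uinv_mul_δ hu hv, sub_sub_cancel]
  calc (d + δ) * ↑v⁻¹ = d * (1 - h * (↑u⁻¹ * δ)) + ↑u⁻¹ * δ := by
        rw [add_mul, ← hv', uinv_mul_δ hu hv]
    _ = (1 - h * (↑u⁻¹ * δ)) * d + (1 - h * (↑u⁻¹ * δ)) * p * (↑u⁻¹ * δ)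
        + h * (d * (↑u⁻¹ * δ) + ↑u⁻¹ * δ * d + ↑u⁻¹ * δ * p * (↑u⁻¹ * δ))
        - (d * h + h * d - (1 - p)) * (↑u⁻¹ * δ) := by noncomm_ring
    _ = ↑v⁻¹ * d + ↑v⁻¹ * p * (↑u⁻¹ * δ) := by
      rw [transferred_perturbation_sq hu hv hd hdδ hp, hp, ← hv']; noncomm_ring

theorem uinv_mul_vinv (hu : (u : R) = 1 + δ * h) (hv : (v : R) = 1 + h * δ) (hh : h * h = 0) :
    (↑u⁻¹ * ↑v⁻¹ : R) = 1 - h * (↑u⁻¹ * δ) - ↑u⁻¹ * δ * h := by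
  calc (↑u⁻¹ * ↑v⁻¹ : R) = (1 - ↑u⁻¹ * δ * h) * ↑v⁻¹ := by
        rw [uinv_mul_δ_mul_h hu, sub_sub_cancel]
    _ = ↑v⁻¹ - ↑u⁻¹ * δ * (h * ↑v⁻¹) := by noncomm_ring
    _ = 1 - h * (↑u⁻¹ * δ) - ↑u⁻¹ * δ * h := by
      rw [h_mul_vinv hv hh, h_mul_uinv_mul_δ hu hv, sub_sub_cancel]

theorem perturbed_homotopy (hu : (u : R) = 1 + δ * h) (hv : (v : R) = 1 + h * δ)
    (hd : d * d = 0) (hdδ : (d + δ) * (d + δ) = 0) (hp : d * h + h * d = 1 - p) :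
    (d + δ) * (h * ↑u⁻¹) + h * ↑u⁻¹ * (d + δ) = 1 - ↑v⁻¹ * p * ↑u⁻¹ := by
  calc (d + δ) * (h * ↑u⁻¹) + h * ↑u⁻¹ * (d + δ)
      = d * h * ↑u⁻¹ + δ * h * ↑u⁻¹ + h * (↑u⁻¹ * (d + δ)) := by noncomm_ring
    _ = d * h * ↑u⁻¹ + (1 - ↑u⁻¹) + h * (d * ↑u⁻¹ + ↑u⁻¹ * δ * p * ↑u⁻¹) := by
      rw [δ_mul_h_mul_uinv hu, uinv_mul_perturbed hu hv hd hdδ hp]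
    _ = (d * h + h * d) * ↑u⁻¹ + (1 - ↑u⁻¹) + h * (↑u⁻¹ * δ) * p * ↑u⁻¹ := by noncomm_ring
    _ = 1 - ↑v⁻¹ * p * ↑u⁻¹ := by rw [hp, h_mul_uinv_mul_δ hu hv]; noncomm_ring

theorem h_mul_uinv_mul_self (hu : (u : R) = 1 + δ * h) (hh : h * h = 0) :
    h * ↑u⁻¹ * (h * ↑u⁻¹) = 0 := by
  rw [mul_assoc, ← mul_assoc _ h, uinv_mul_h hu hh, ← mul_assoc, hh, zero_mul]

section Transfer

variable {MA MB : Type*} [AddCommGroup MA] [AddCommGroup MB]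
  {dA α U V E : MA →+ MA} {dB : MB →+ MB} {f : MA →+ MB} {g : MB →+ MA}

theorem transfer_sq_eq_zero (hf : f.comp dA = dB.comp f) (hg : dA.comp g = g.comp dB)
    (hdB : dB.comp dB = 0) (hα : dA.comp α + α.comp dA + (α.comp (g.comp f)).comp α = 0) :
    (dB + (f.comp α).comp g).comp (dB + (f.comp α).comp g) = 0 := by
  ext x
  have key := congr(f $(DFunLike.congr_fun hα (g x)))
  have hf' := DFunLike.congr_fun hf
  have hg' := DFunLike.congr_fun hg
  simp only [AddMonoidHom.add_apply, AddMonoidHom.comp_apply, map_add, map_zero,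
    AddMonoidHom.zero_apply] at key hf' hg' ⊢
  have hdB' : dB (dB x) = 0 := DFunLike.congr_fun hdB x
  rw [← hf', ← hg', hdB', zero_add, ← key]
  abel

theorem chain_map_comp_left (hf : f.comp dA = dB.comp f)
    (hU : U.comp E = dA.comp U + (α.comp (g.comp f)).comp U) :
    (f.comp U).comp E = (dB + (f.comp α).comp g).comp (f.comp U) := by
  rw [AddMonoidHom.comp_assoc, hU, AddMonoidHom.comp_add, AddMonoidHom.add_comp,
    ← AddMonoidHom.comp_assoc, hf]
  rfl

theorem chain_map_comp_right (hg : dA.comp g = g.comp dB)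
    (hV : E.comp V = V.comp dA + (V.comp (g.comp f)).comp α) :
    E.comp (V.comp g) = (V.comp g).comp (dB + (f.comp α).comp g) := by
  rw [← AddMonoidHom.comp_assoc, hV, AddMonoidHom.add_comp, AddMonoidHom.comp_add,
    AddMonoidHom.comp_assoc, hg]
  rfl

theorem comp_comp_eq_id {h : MA →+ MA} (hfg : f.comp g = AddMonoidHom.id MB)
    (hfh : f.comp h = 0) (hhg : h.comp g = 0)
    (hUV : U.comp V = AddMonoidHom.id MA - h.comp α - α.comp h) :
    (f.comp U).comp (V.comp g) = AddMonoidHom.id MB := by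
  ext x
  have hUV' := DFunLike.congr_fun hUV (g x)
  simp only [AddMonoidHom.comp_apply, AddMonoidHom.sub_apply, AddMonoidHom.id_apply] at hUV' ⊢
  have hfh' (y : MA) : f (h y) = 0 := DFunLike.congr_fun hfh y
  have hhg' : h (g x) = 0 := DFunLike.congr_fun hhg x
  have hfg' : f (g x) = x := DFunLike.congr_fun hfg x
  rw [hUV', map_sub, map_sub, hhg', hfh', hfg', map_zero, map_zero, sub_zero, sub_zero]

end Transfer

end Perturbation

section StrongDeformationRetract

variable {MA MB : Type*} [AddCommGroup MA] [AddCommGroup MB]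

structure IsStrongDeformationRetract (dA : MA →+ MA) (dB : MB →+ MB) (f : MA →+ MB)
    (g : MB →+ MA) (h : MA →+ MA) : Prop where
  dA_sq : dA.comp dA = 0
  dB_sq : dB.comp dB = 0
  f_chain : f.comp dA = dB.comp f
  g_chain : dA.comp g = g.comp dB
  f_comp_g : f.comp g = AddMonoidHom.id MB
  homotopy : dA.comp h + h.comp dA = AddMonoidHom.id MA - g.comp f
  f_comp_h : f.comp h = 0
  h_comp_g : h.comp g = 0
  h_comp_h : h.comp h = 0

open Perturbation in
theorem IsStrongDeformationRetract.perturb {dA δ h : MA →+ MA} {dB : MB →+ MB}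
    {f : MA →+ MB} {g : MB →+ MA} (H : IsStrongDeformationRetract dA dB f g h)
    (hδ : (dA + δ).comp (dA + δ) = 0) {u v : (AddMonoid.End MA)ˣ}
    (hu : homOfEnd (u : AddMonoid.End MA) = AddMonoidHom.id MA + δ.comp h)
    (hv : homOfEnd (v : AddMonoid.End MA) = AddMonoidHom.id MA + h.comp δ) :
    IsStrongDeformationRetract (dA + δ) (dB + ((f.comp (homOfEnd ↑u⁻¹)).comp δ).comp g)
      (f.comp (homOfEnd ↑u⁻¹)) ((homOfEnd ↑v⁻¹).comp g) (h.comp (homOfEnd ↑u⁻¹)) :=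
  have hα := transferred_perturbation_sq (R := AddMonoid.End MA) (d := dA) (p := g.comp f)
    hu hv H.dA_sq hδ H.homotopy
  have hf := uinv_mul_perturbed (R := AddMonoid.End MA) (d := dA) (p := g.comp f)
    hu hv H.dA_sq hδ H.homotopy
  have hg := perturbed_mul_vinv (R := AddMonoid.End MA) (d := dA) (p := g.comp f)
    hu hv H.dA_sq hδ H.homotopy
  have hUh : (homOfEnd ↑u⁻¹).comp h = h := uinv_mul_h (R := AddMonoid.End MA) hu H.h_comp_h
  have hhU : h.comp (homOfEnd ↑u⁻¹) = (homOfEnd ↑v⁻¹).comp h :=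
    h_mul_uinv (R := AddMonoid.End MA) hu hv
  have hhV : h.comp (homOfEnd ↑v⁻¹) = h := h_mul_vinv (R := AddMonoid.End MA) hv H.h_comp_h
  { dA_sq := hδ
    dB_sq := (transfer_sq_eq_zero H.f_chain H.g_chain H.dB_sq hα :)
    f_chain := (chain_map_comp_left H.f_chain hf :)
    g_chain := (chain_map_comp_right H.g_chain hg :)
    f_comp_g := (comp_comp_eq_id H.f_comp_g H.f_comp_h H.h_comp_g
      (uinv_mul_vinv (R := AddMonoid.End MA) hu hv H.h_comp_h) :)
    homotopy := perturbed_homotopy (R := AddMonoid.End MA) (d := dA) (p := g.comp f)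
      hu hv H.dA_sq hδ H.homotopy
    f_comp_h := by
      rw [AddMonoidHom.comp_assoc, ← AddMonoidHom.comp_assoc _ h, hUh,
        ← AddMonoidHom.comp_assoc, H.f_comp_h, AddMonoidHom.zero_comp]
    h_comp_g := by
      rw [hhU, AddMonoidHom.comp_assoc, ← AddMonoidHom.comp_assoc g, hhV, H.h_comp_g,
        AddMonoidHom.comp_zero]
    h_comp_h := h_mul_uinv_mul_self (R := AddMonoid.End MA) hu H.h_comp_h }

end StrongDeformationRetract

theorem basic_perturbation_lemma_general
    {MA MB : Type*} [AddCommGroup MA] [AddCommGroup MB]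
    (𝒜 : ℤ → AddSubgroup MA) (ℬ : ℤ → AddSubgroup MB)
    (dA : MA →+ MA) (dB : MB →+ MB)
    (hdA2 : dA.comp dA = 0) (hdB2 : dB.comp dB = 0)
    (f : MA →+ MB) (g : MB →+ MA) (h δ : MA →+ MA)
    (hfdeg : ∀ (i : ℤ), ∀ x ∈ 𝒜 i, f x ∈ ℬ i)
    (hgdeg : ∀ (i : ℤ), ∀ x ∈ ℬ i, g x ∈ 𝒜 i)
    (hhdeg : ∀ (i : ℤ), ∀ x ∈ 𝒜 i, h x ∈ 𝒜 (i + 1))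
    (hδdeg : ∀ (i : ℤ), ∀ x ∈ 𝒜 i, δ x ∈ 𝒜 (i - 1))
    (hfchain : f.comp dA = dB.comp f)
    (hgchain : dA.comp g = g.comp dB)
    (hfg : f.comp g = AddMonoidHom.id MB)
    (hhom : dA.comp h + h.comp dA = AddMonoidHom.id MA - g.comp f)
    (hfh : f.comp h = 0) (hhg : h.comp g = 0) (hhh : h.comp h = 0)
    (hδ2 : (dA + δ).comp (dA + δ) = 0)
    (u : (AddMonoid.End MA)ˣ)
    (hu : homOfEnd (u : AddMonoid.End MA) = AddMonoidHom.id MA + δ.comp h)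
    (hudeg : ∀ (i : ℤ), ∀ x ∈ 𝒜 i, homOfEnd ((u⁻¹ : (AddMonoid.End MA)ˣ) : AddMonoid.End MA) x ∈ 𝒜 i)
    (v : (AddMonoid.End MA)ˣ)
    (hv : homOfEnd (v : AddMonoid.End MA) = AddMonoidHom.id MA + h.comp δ)
    (hvdeg : ∀ (i : ℤ), ∀ x ∈ 𝒜 i, homOfEnd ((v⁻¹ : (AddMonoid.End MA)ˣ) : AddMonoid.End MA) x ∈ 𝒜 i) :
    let uinv : MA →+ MA := homOfEnd ((u⁻¹ : (AddMonoid.End MA)ˣ) : AddMonoid.End MA)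
    let vinv : MA →+ MA := homOfEnd ((v⁻¹ : (AddMonoid.End MA)ˣ) : AddMonoid.End MA)
    let f' : MA →+ MB := f.comp uinv
    let g' : MB →+ MA := vinv.comp g
    let h' : MA →+ MA := h.comp uinv
    let δ' : MB →+ MB := (f'.comp δ).comp g
    -- the perturbed differential on B squares to zero:
    (dB + δ').comp (dB + δ') = 0 ∧
    -- degrees: f̂, ĝ have degree 0, ĥ degree +1, δ' degree -1:
    (∀ (i : ℤ), ∀ x ∈ 𝒜 i, f' x ∈ ℬ i) ∧
    (∀ (i : ℤ), ∀ x ∈ ℬ i, g' x ∈ 𝒜 i) ∧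
    (∀ (i : ℤ), ∀ x ∈ 𝒜 i, h' x ∈ 𝒜 (i + 1)) ∧
    (∀ (i : ℤ), ∀ x ∈ ℬ i, δ' x ∈ ℬ (i - 1)) ∧
    -- f̂, ĝ are chain maps for the perturbed differentials:
    f'.comp (dA + δ) = (dB + δ').comp f' ∧
    (dA + δ).comp g' = g'.comp (dB + δ') ∧
    -- SDR identities:
    f'.comp g' = AddMonoidHom.id MB ∧
    (dA + δ).comp h' + h'.comp (dA + δ) = AddMonoidHom.id MA - g'.comp f' ∧
    f'.comp h' = 0 ∧ h'.comp g' = 0 ∧ h'.comp h' = 0 := by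
  intro uinv vinv f' g' h' δ'
  have H : IsStrongDeformationRetract dA dB f g h :=
    ⟨hdA2, hdB2, hfchain, hgchain, hfg, hhom, hfh, hhg, hhh⟩
  obtain ⟨-, hdB', hf', hg', hfg', hhom', hfh', hhg', hhh'⟩ := H.perturb hδ2 hu hv
  exact ⟨hdB', fun i x hx => hfdeg i _ (hudeg i x hx), fun i x hx => hvdeg i _ (hgdeg i x hx),
    fun i x hx => hhdeg i _ (hudeg i x hx),
    fun i x hx => hfdeg _ _ (hudeg _ _ (hδdeg _ _ (hgdeg _ _ hx))),
    hf', hg', hfg', hhom', hfh', hhg', hhh'⟩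

/-- **Basic Perturbation Lemma.** Given a strong deformation retraction `(f,g,h)`
from a chain complex `A` (graded group `MA` with grading `𝒜` and differential `dA`)
to `B`, with side conditions `fh = 0`, `hg = 0`, `hh = 0`, and a perturbation `δ` of
`A` (degree `-1`, `(d+δ)² = 0`) such that `1 + δh` is invertible (a unit `u` of the
endomorphism ring, with inverse of degree `0`; then `1 + hδ` is also invertible, say
with inverse the unit `v⁻¹`), the maps `f̂ = f(1+δh)⁻¹`, `ĝ = (1+hδ)⁻¹g`,
`ĥ = h(1+δh)⁻¹` and `δ' = f̂δg` satisfy `(d_B+δ')² = 0` and form a strong deformation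
retraction from `(A, d_A+δ)` to `(B, d_B+δ')`. -/
theorem basic_perturbation_lemma
    {MA MB : Type*} [AddCommGroup MA] [AddCommGroup MB]
    (𝒜 : ℤ → AddSubgroup MA) (ℬ : ℤ → AddSubgroup MB)
    (dA : MA →+ MA) (dB : MB →+ MB)
    (hdAdeg : ∀ (i : ℤ), ∀ x ∈ 𝒜 i, dA x ∈ 𝒜 (i - 1))
    (hdBdeg : ∀ (i : ℤ), ∀ x ∈ ℬ i, dB x ∈ ℬ (i - 1))
    (hdA2 : dA.comp dA = 0) (hdB2 : dB.comp dB = 0)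
    (f : MA →+ MB) (g : MB →+ MA) (h δ : MA →+ MA)
    (hfdeg : ∀ (i : ℤ), ∀ x ∈ 𝒜 i, f x ∈ ℬ i)
    (hgdeg : ∀ (i : ℤ), ∀ x ∈ ℬ i, g x ∈ 𝒜 i)
    (hhdeg : ∀ (i : ℤ), ∀ x ∈ 𝒜 i, h x ∈ 𝒜 (i + 1))
    (hδdeg : ∀ (i : ℤ), ∀ x ∈ 𝒜 i, δ x ∈ 𝒜 (i - 1))
    (hfchain : f.comp dA = dB.comp f)
    (hgchain : dA.comp g = g.comp dB)
    (hfg : f.comp g = AddMonoidHom.id MB)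
    (hhom : dA.comp h + h.comp dA = AddMonoidHom.id MA - g.comp f)
    (hfh : f.comp h = 0) (hhg : h.comp g = 0) (hhh : h.comp h = 0)
    (hδ2 : (dA + δ).comp (dA + δ) = 0)
    (u : (AddMonoid.End MA)ˣ)
    (hu : homOfEnd (u : AddMonoid.End MA) = AddMonoidHom.id MA + δ.comp h)
    (hudeg : ∀ (i : ℤ), ∀ x ∈ 𝒜 i, homOfEnd ((u⁻¹ : (AddMonoid.End MA)ˣ) : AddMonoid.End MA) x ∈ 𝒜 i)
    (v : (AddMonoid.End MA)ˣ)
    (hv : homOfEnd (v : AddMonoid.End MA) = AddMonoidHom.id MA + h.comp δ)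
    (hvdeg : ∀ (i : ℤ), ∀ x ∈ 𝒜 i, homOfEnd ((v⁻¹ : (AddMonoid.End MA)ˣ) : AddMonoid.End MA) x ∈ 𝒜 i) :
    let uinv : MA →+ MA := homOfEnd ((u⁻¹ : (AddMonoid.End MA)ˣ) : AddMonoid.End MA)
    let vinv : MA →+ MA := homOfEnd ((v⁻¹ : (AddMonoid.End MA)ˣ) : AddMonoid.End MA)
    let f' : MA →+ MB := f.comp uinv
    let g' : MB →+ MA := vinv.comp g
    let h' : MA →+ MA := h.comp uinv
    let δ' : MB →+ MB := (f'.comp δ).comp g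
    -- the perturbed differential on B squares to zero:
    (dB + δ').comp (dB + δ') = 0 ∧
    -- degrees: f̂, ĝ have degree 0, ĥ degree +1, δ' degree -1:
    (∀ (i : ℤ), ∀ x ∈ 𝒜 i, f' x ∈ ℬ i) ∧
    (∀ (i : ℤ), ∀ x ∈ ℬ i, g' x ∈ 𝒜 i) ∧
    (∀ (i : ℤ), ∀ x ∈ 𝒜 i, h' x ∈ 𝒜 (i + 1)) ∧
    (∀ (i : ℤ), ∀ x ∈ ℬ i, δ' x ∈ ℬ (i - 1)) ∧
    -- f̂, ĝ are chain maps for the perturbed differentials: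
    f'.comp (dA + δ) = (dB + δ').comp f' ∧
    (dA + δ).comp g' = g'.comp (dB + δ') ∧
    -- SDR identities:
    f'.comp g' = AddMonoidHom.id MB ∧
    (dA + δ).comp h' + h'.comp (dA + δ) = AddMonoidHom.id MA - g'.comp f' ∧
    f'.comp h' = 0 ∧ h'.comp g' = 0 ∧ h'.comp h' = 0 :=
  basic_perturbation_lemma_general 𝒜 ℬ dA dB hdA2 hdB2 f g h δ hfdeg hgdeg hhdeg hδdeg hfchain
    hgchain hfg hhom hfh hhg hhh hδ2 u hu hudeg v hv hvdeg
end

section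
/- Let (f,g,h) be a strong deformation retraction from A to B (with side conditions fh=0, hg=0, hh=0) and δ a degree −1 endomorphism of A satisfying the Maurer–Cartan equation D(δ) = −δ² in the endomorphism complex (i.e., (d+δ)² = 0). Set α = 1 + δh. Then (D + δ∘−)(α) = δgf, where D is the Hom-complex differential Dφ = dφ − (−1)^{|φ|}φd. Consequently, if α is invertible, α⁻¹·(D+δ∘−)(α) = α⁻¹δgf factors through f. -/
/-- For an SDR `(f,g,h) : A → B` with side conditions and a Maurer–Cartan
perturbation `δ` of `A`, the degree-0 map `α = 1 + δh` satisfies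
`(D + δ∘-)(α) = δgf`, where `Dφ = dφ - φd` for `φ` of degree 0; consequently, if
`α` is invertible, `α⁻¹·(D+δ∘-)(α) = α⁻¹δgf` factors through `f`. -/
theorem perturbation_alpha_factors
    {MA MB : Type*} [AddCommGroup MA] [AddCommGroup MB]
    (dA : MA →+ MA) (dB : MB →+ MB)
    (hdA2 : dA.comp dA = 0) (hdB2 : dB.comp dB = 0)
    (f : MA →+ MB) (g : MB →+ MA) (h δ : MA →+ MA)
    (hfchain : f.comp dA = dB.comp f)
    (hgchain : dA.comp g = g.comp dB)
    (hfg : f.comp g = AddMonoidHom.id MB)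
    (hhom : dA.comp h + h.comp dA = AddMonoidHom.id MA - g.comp f)
    (hfh : f.comp h = 0) (hhg : h.comp g = 0) (hhh : h.comp h = 0)
    (hδ2 : (dA + δ).comp (dA + δ) = 0) :
    let α : MA →+ MA := AddMonoidHom.id MA + δ.comp h
    (dA.comp α - α.comp dA) + δ.comp α = δ.comp (g.comp f) ∧
    (∀ u : (AddMonoid.End MA)ˣ, homOfEnd (u : AddMonoid.End MA) = α →
      ∃ k : MB →+ MA,
        (homOfEnd ((u⁻¹ : (AddMonoid.End MA)ˣ) : AddMonoid.End MA)).comp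
            ((dA.comp α - α.comp dA) + δ.comp α) = k.comp f) := by
  intro α
  have key : (dA.comp α - α.comp dA) + δ.comp α = δ.comp (g.comp f) := by
    ext x
    have H1 : dA (dA x) = 0 := congrFun (congrArg (↑·) hdA2) x
    have H2 : dA (dA (h x)) + dA (δ (h x)) + (δ (dA (h x)) + δ (δ (h x))) = 0 := by
      have := congrFun (congrArg (↑·) hδ2) (h x)
      simpa using this
    have H3 : dA (dA (h x)) = 0 := congrFun (congrArg (↑·) hdA2) (h x)
    have H4 : dA (h x) + h (dA x) = x - g (f x) := by
      have := congrFun (congrArg (↑·) hhom) x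
      simpa using this
    have H5 : δ (dA (h x)) = δ x - δ (g (f x)) - δ (h (dA x)) := by
      have := congrArg δ H4
      simp only [map_add, map_sub] at this
      linear_combination (norm := abel) this
    simp only [α, AddMonoidHom.sub_apply, AddMonoidHom.add_apply, AddMonoidHom.comp_apply,
      AddMonoidHom.id_apply, map_add]
    linear_combination (norm := abel) H2 - H5 - H3
  refine ⟨key, fun u hu => ?_⟩
  refine ⟨(homOfEnd ((u⁻¹ : (AddMonoid.End MA)ˣ) : AddMonoid.End MA)).comp (δ.comp g), ?_⟩
  rw [key]
  simp [AddMonoidHom.comp_assoc]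
end

section
/- (Iterated perturbation.) Let (f,g,h) : A → B be an SDR with side conditions, and let δ, ε be perturbations of A such that 1+δh and 1+(ε−δ)h₁ are invertible, where h₁ = h(1+δh)⁻¹ is the homotopy of the perturbed SDR. Then the composite of the two perturbation steps equals the single perturbation by ε: in particular (1 + (ε−δ)h₁)(1 + δh) = 1 + εh as graded endomorphisms of A. -/
/-- **Iterated perturbation.** For an SDR `(f,g,h) : A → B` with side conditions and
perturbations `δ`, `ε` of `A` with `1+δh` invertible (unit `u`) and
`1+(ε-δ)h₁` invertible (unit `w`), where `h₁ = h(1+δh)⁻¹`, the two perturbation steps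
compose to the single one: `(1 + (ε-δ)h₁)(1 + δh) = 1 + εh`. -/
theorem iterated_perturbation
    {MA MB : Type*} [AddCommGroup MA] [AddCommGroup MB]
    (dA : MA →+ MA) (dB : MB →+ MB)
    (hdA2 : dA.comp dA = 0) (hdB2 : dB.comp dB = 0)
    (f : MA →+ MB) (g : MB →+ MA) (h δ ε : MA →+ MA)
    (hfchain : f.comp dA = dB.comp f)
    (hgchain : dA.comp g = g.comp dB)
    (hfg : f.comp g = AddMonoidHom.id MB)
    (hhom : dA.comp h + h.comp dA = AddMonoidHom.id MA - g.comp f)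
    (hfh : f.comp h = 0) (hhg : h.comp g = 0) (hhh : h.comp h = 0)
    (hδ2 : (dA + δ).comp (dA + δ) = 0)
    (hε2 : (dA + ε).comp (dA + ε) = 0)
    (u : (AddMonoid.End MA)ˣ)
    (hu : homOfEnd (u : AddMonoid.End MA) = AddMonoidHom.id MA + δ.comp h)
    (w : (AddMonoid.End MA)ˣ)
    (hw : homOfEnd (w : AddMonoid.End MA) = AddMonoidHom.id MA +
      (ε - δ).comp (h.comp (homOfEnd ((u⁻¹ : (AddMonoid.End MA)ˣ) : AddMonoid.End MA)))) :
    (homOfEnd (w : AddMonoid.End MA)).comp (homOfEnd (u : AddMonoid.End MA)) =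
      AddMonoidHom.id MA + ε.comp h := by
  ext a
  have hinv : (homOfEnd ((u⁻¹ : (AddMonoid.End MA)ˣ) : AddMonoid.End MA))
      ((homOfEnd (u : AddMonoid.End MA)) a) = a := by
    show ((↑u⁻¹ * ↑u : AddMonoid.End MA)) a = a
    rw [u.inv_mul]; rfl
  have hua := congrArg (fun p : MA →+ MA => p a) hu
  have hwa := congrArg (fun p : MA →+ MA => p ((homOfEnd (u : AddMonoid.End MA)) a)) hw
  simp only [AddMonoidHom.comp_apply, AddMonoidHom.add_apply, AddMonoidHom.id_apply,
    AddMonoidHom.sub_apply] at hua hwa ⊢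
  rw [hwa, hinv, hua]
  abel
end

section
/- (Tensor product of SDRs.) Let (f^ℓ, g^ℓ, h^ℓ) : A^ℓ → B^ℓ and (f^r, g^r, h^r) : A^r → B^r be strong deformation retractions of chain complexes of abelian groups (with side conditions fh=0, hg=0, hh=0). Then (f^ℓ⊗f^r, g^ℓ⊗g^r, h^ℓ⊗1 + g^ℓf^ℓ⊗h^r) is a strong deformation retraction from A^ℓ⊗A^r to B^ℓ⊗B^r satisfying the same side conditions, where tensor products of maps use the Koszul sign convention. -/
/-!
Every map in sight is of the form `map u v`, so by `map_comp` and bilinearity of `map` each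
identity reduces to identities between endomorphisms of the two factors. The only nontrivial one
is the homotopy formula: the cross terms `σh + hσ` and `d(pσ) + (pσ)d` vanish because `h` and `d`
anticommute with `σ` while `p = gf` commutes with `d` and `σ`, and `σ(pσ) = (pσ)σ = p` collects
the remaining terms into `p ⊗ (d'h' + h'd') = p ⊗ (1 - p')`.
-/

open TensorProduct

theorem LinearMap.comp_comp_comm_of_intertwining {R M N : Type*} [Semiring R] [AddCommMonoid M]
    [Module R M] [AddCommMonoid N] [Module R N] {a : M →ₗ[R] M} {b : N →ₗ[R] N} {f : M →ₗ[R] N}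
    {g : N →ₗ[R] M} (hf : f ∘ₗ a = b ∘ₗ f) (hg : g ∘ₗ b = a ∘ₗ g) :
    (g ∘ₗ f) ∘ₗ a = a ∘ₗ (g ∘ₗ f) := by
  rw [LinearMap.comp_assoc, hf, ← LinearMap.comp_assoc, hg, LinearMap.comp_assoc]

namespace TensorProduct

open LinearMap

section Semiring

variable {R M N M' N' : Type*} [CommSemiring R] [AddCommMonoid M] [Module R M] [AddCommMonoid N]
  [Module R N] [AddCommMonoid M'] [Module R M'] [AddCommMonoid N'] [Module R N']

def koszulDifferential (d σ : M →ₗ[R] M) (d' : M' →ₗ[R] M') : M ⊗[R] M' →ₗ[R] M ⊗[R] M' :=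
  map d LinearMap.id + map σ d'

def koszulHomotopy (h p σ : M →ₗ[R] M) (h' : M' →ₗ[R] M') : M ⊗[R] M' →ₗ[R] M ⊗[R] M' :=
  map h LinearMap.id + map (p ∘ₗ σ) h'

theorem map_comp_koszulDifferential {d σ : M →ₗ[R] M} {e τ : N →ₗ[R] N} {d' : M' →ₗ[R] M'}
    {e' : N' →ₗ[R] N'} {f : M →ₗ[R] N} {f' : M' →ₗ[R] N'} (hf : f ∘ₗ d = e ∘ₗ f)
    (hfσ : τ ∘ₗ f = f ∘ₗ σ) (hf' : f' ∘ₗ d' = e' ∘ₗ f') :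
    map f f' ∘ₗ koszulDifferential d σ d' = koszulDifferential e τ e' ∘ₗ map f f' := by
  simp only [koszulDifferential, comp_add, add_comp, ← map_comp, hf, hfσ, hf', comp_id, id_comp]

theorem map_comp_koszulHomotopy_eq_zero {h p σ : M →ₗ[R] M} {h' : M' →ₗ[R] M'}
    {f : M →ₗ[R] N} {f' : M' →ₗ[R] N'} (hfh : f ∘ₗ h = 0) (hfh' : f' ∘ₗ h' = 0) :
    map f f' ∘ₗ koszulHomotopy h p σ h' = 0 := by
  simp only [koszulHomotopy, comp_add, ← map_comp, hfh, hfh', map_zero_left, map_zero_right,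
    add_zero]

theorem koszulHomotopy_comp_map_eq_zero {h p σ : M →ₗ[R] M} {h' : M' →ₗ[R] M'}
    {g : N →ₗ[R] M} {g' : N' →ₗ[R] M'} (hhg : h ∘ₗ g = 0) (hhg' : h' ∘ₗ g' = 0) :
    koszulHomotopy h p σ h' ∘ₗ map g g' = 0 := by
  simp only [koszulHomotopy, add_comp, ← map_comp, hhg, hhg', map_zero_left, map_zero_right,
    add_zero]

end Semiring

section Ring

variable {R M M' : Type*} [CommRing R] [AddCommGroup M] [Module R M] [AddCommGroup M']
  [Module R M']

theorem koszulHomotopy_comp_self {h p σ : M →ₗ[R] M} {h' : M' →ₗ[R] M'}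
    (hσh : σ ∘ₗ h = -(h ∘ₗ σ)) (hhh : h ∘ₗ h = 0) (hhp : h ∘ₗ p = 0) (hph : p ∘ₗ h = 0)
    (hhh' : h' ∘ₗ h' = 0) :
    koszulHomotopy h p σ h' ∘ₗ koszulHomotopy h p σ h' = 0 := by
  have hhpσ : h ∘ₗ (p ∘ₗ σ) = 0 := by rw [← comp_assoc, hhp, zero_comp]
  have hpσh : (p ∘ₗ σ) ∘ₗ h = 0 := by
    rw [comp_assoc, hσh, comp_neg, ← comp_assoc, hph, zero_comp, neg_zero]
  simp only [koszulHomotopy, add_comp, comp_add, ← map_comp, hhh, hhpσ, hpσh, hhh', map_zero_left,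
    map_zero_right, add_zero]

theorem koszulDifferential_comp_koszulHomotopy_add {d σ h p : M →ₗ[R] M}
    {d' h' p' : M' →ₗ[R] M'} (hσσ : σ ∘ₗ σ = LinearMap.id) (hσd : σ ∘ₗ d = -(d ∘ₗ σ))
    (hσh : σ ∘ₗ h = -(h ∘ₗ σ)) (hpd : p ∘ₗ d = d ∘ₗ p) (hσp : σ ∘ₗ p = p ∘ₗ σ)
    (hdh : d ∘ₗ h + h ∘ₗ d = LinearMap.id - p) (hdh' : d' ∘ₗ h' + h' ∘ₗ d' = LinearMap.id - p') :
    koszulDifferential d σ d' ∘ₗ koszulHomotopy h p σ h' +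
        koszulHomotopy h p σ h' ∘ₗ koszulDifferential d σ d' = LinearMap.id - map p p' := by
  have hσpσ : σ ∘ₗ (p ∘ₗ σ) = p := by rw [← comp_assoc, hσp, comp_assoc, hσσ, comp_id]
  have hpσσ : (p ∘ₗ σ) ∘ₗ σ = p := by rw [comp_assoc, hσσ, comp_id]
  have hdpσ : d ∘ₗ (p ∘ₗ σ) + (p ∘ₗ σ) ∘ₗ d = 0 := by
    rw [comp_assoc d σ p, hσd, comp_neg, ← comp_assoc σ d p, hpd, comp_assoc, add_neg_cancel]
  calc _ = map (d ∘ₗ h + h ∘ₗ d) LinearMap.id + map (σ ∘ₗ h + h ∘ₗ σ) d'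
          + map (d ∘ₗ (p ∘ₗ σ) + (p ∘ₗ σ) ∘ₗ d) h' + map p (d' ∘ₗ h' + h' ∘ₗ d') := by
        simp only [koszulDifferential, koszulHomotopy, comp_add, add_comp, ← map_comp, hσpσ, hpσσ,
          map_add_left, map_add_right, comp_id, id_comp]
        abel
    _ = map (LinearMap.id - p) LinearMap.id + map p (LinearMap.id - p') := by
        rw [hdh, hσh, neg_add_cancel, hdpσ, hdh', map_zero_left, map_zero_left, add_zero, add_zero]
    _ = LinearMap.id - map p p' := by
        ext a b
        simp [sub_tmul, tmul_sub]

end Ring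

end TensorProduct

theorem sdr_tensor_general
    {Aℓ Bℓ Ar Br : Type*} [AddCommGroup Aℓ] [AddCommGroup Bℓ]
    [AddCommGroup Ar] [AddCommGroup Br]
    (dAℓ : Aℓ →ₗ[ℤ] Aℓ) (dBℓ : Bℓ →ₗ[ℤ] Bℓ) (dAr : Ar →ₗ[ℤ] Ar) (dBr : Br →ₗ[ℤ] Br)
    -- sign involutions of the left complexes:
    (σAℓ : Aℓ →ₗ[ℤ] Aℓ) (σBℓ : Bℓ →ₗ[ℤ] Bℓ)
    (hσAℓ : σAℓ ∘ₗ σAℓ = LinearMap.id)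
    (hσdAℓ : σAℓ ∘ₗ dAℓ = -(dAℓ ∘ₗ σAℓ))
    -- the left SDR:
    (fℓ : Aℓ →ₗ[ℤ] Bℓ) (gℓ : Bℓ →ₗ[ℤ] Aℓ) (hℓ : Aℓ →ₗ[ℤ] Aℓ)
    (hfℓchain : fℓ ∘ₗ dAℓ = dBℓ ∘ₗ fℓ) (hgℓchain : dAℓ ∘ₗ gℓ = gℓ ∘ₗ dBℓ)
    (hfℓσ : σBℓ ∘ₗ fℓ = fℓ ∘ₗ σAℓ) (hgℓσ : σAℓ ∘ₗ gℓ = gℓ ∘ₗ σBℓ)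
    (hhℓσ : σAℓ ∘ₗ hℓ = -(hℓ ∘ₗ σAℓ))
    (hfgℓ : fℓ ∘ₗ gℓ = LinearMap.id)
    (hhomℓ : dAℓ ∘ₗ hℓ + hℓ ∘ₗ dAℓ = LinearMap.id - gℓ ∘ₗ fℓ)
    (hfhℓ : fℓ ∘ₗ hℓ = 0) (hhgℓ : hℓ ∘ₗ gℓ = 0) (hhhℓ : hℓ ∘ₗ hℓ = 0)
    -- the right SDR:
    (fr : Ar →ₗ[ℤ] Br) (gr : Br →ₗ[ℤ] Ar) (hr : Ar →ₗ[ℤ] Ar)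
    (hfrchain : fr ∘ₗ dAr = dBr ∘ₗ fr) (hgrchain : dAr ∘ₗ gr = gr ∘ₗ dBr)
    (hfgr : fr ∘ₗ gr = LinearMap.id)
    (hhomr : dAr ∘ₗ hr + hr ∘ₗ dAr = LinearMap.id - gr ∘ₗ fr)
    (hfhr : fr ∘ₗ hr = 0) (hhgr : hr ∘ₗ gr = 0) (hhhr : hr ∘ₗ hr = 0) :
    let DA : Aℓ ⊗[ℤ] Ar →ₗ[ℤ] Aℓ ⊗[ℤ] Ar :=
      TensorProduct.map dAℓ LinearMap.id + TensorProduct.map σAℓ dAr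
    let DB : Bℓ ⊗[ℤ] Br →ₗ[ℤ] Bℓ ⊗[ℤ] Br :=
      TensorProduct.map dBℓ LinearMap.id + TensorProduct.map σBℓ dBr
    let F : Aℓ ⊗[ℤ] Ar →ₗ[ℤ] Bℓ ⊗[ℤ] Br := TensorProduct.map fℓ fr
    let G : Bℓ ⊗[ℤ] Br →ₗ[ℤ] Aℓ ⊗[ℤ] Ar := TensorProduct.map gℓ gr
    let H : Aℓ ⊗[ℤ] Ar →ₗ[ℤ] Aℓ ⊗[ℤ] Ar :=
      TensorProduct.map hℓ LinearMap.id + TensorProduct.map ((gℓ ∘ₗ fℓ) ∘ₗ σAℓ) hr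
    F ∘ₗ DA = DB ∘ₗ F ∧
    DA ∘ₗ G = G ∘ₗ DB ∧
    F ∘ₗ G = LinearMap.id ∧
    DA ∘ₗ H + H ∘ₗ DA = LinearMap.id - G ∘ₗ F ∧
    F ∘ₗ H = 0 ∧ H ∘ₗ G = 0 ∧ H ∘ₗ H = 0 := by
  intro DA DB F G H
  have hpd : (gℓ ∘ₗ fℓ) ∘ₗ dAℓ = dAℓ ∘ₗ (gℓ ∘ₗ fℓ) :=
    LinearMap.comp_comp_comm_of_intertwining hfℓchain hgℓchain.symm
  have hσp : σAℓ ∘ₗ (gℓ ∘ₗ fℓ) = (gℓ ∘ₗ fℓ) ∘ₗ σAℓ :=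
    (LinearMap.comp_comp_comm_of_intertwining hfℓσ.symm hgℓσ.symm).symm
  have hhp : hℓ ∘ₗ (gℓ ∘ₗ fℓ) = 0 := by rw [← LinearMap.comp_assoc, hhgℓ, LinearMap.zero_comp]
  have hph : (gℓ ∘ₗ fℓ) ∘ₗ hℓ = 0 := by rw [LinearMap.comp_assoc, hfhℓ, LinearMap.comp_zero]
  -- `rw [← map_comp]` cannot see through the `Module ℤ` instances the statement puts on `⊗[ℤ]`
  have hFG : F ∘ₗ G = map (fℓ ∘ₗ gℓ) (fr ∘ₗ gr) := (map_comp ..).symm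
  have hGF : G ∘ₗ F = map (gℓ ∘ₗ fℓ) (gr ∘ₗ fr) := (map_comp ..).symm
  refine ⟨map_comp_koszulDifferential hfℓchain hfℓσ hfrchain,
    (map_comp_koszulDifferential hgℓchain.symm hgℓσ hgrchain.symm).symm, ?_, ?_,
    map_comp_koszulHomotopy_eq_zero hfhℓ hfhr, koszulHomotopy_comp_map_eq_zero hhgℓ hhgr,
    koszulHomotopy_comp_self hhℓσ hhhℓ hhp hph hhhr⟩
  · rw [hFG, hfgℓ, hfgr]
    exact map_id
  · rw [hGF]
    exact koszulDifferential_comp_koszulHomotopy_add hσAℓ hσdAℓ hhℓσ hpd hσp hhomℓ hhomr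

/-- **Tensor product of SDRs.** Given strong deformation retractions
`(fℓ, gℓ, hℓ) : Aℓ → Bℓ` and `(fr, gr, hr) : Ar → Br` of chain complexes of abelian
groups (with side conditions), the triple
`(fℓ⊗fr, gℓ⊗gr, hℓ⊗1 + gℓfℓ⊗hr)` is a strong deformation retraction
`Aℓ⊗Ar → Bℓ⊗Br` with the same side conditions.  Koszul signs are encoded via the
sign involutions `σ` of the left-hand complexes (`σ = (-1)^i` on degree `i`), so that
the tensor differential is `d⊗1 + σ⊗d` and `gℓfℓ⊗hr` acts as `(gℓfℓσAℓ)⊗hr`. -/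
theorem sdr_tensor
    {Aℓ Bℓ Ar Br : Type*} [AddCommGroup Aℓ] [AddCommGroup Bℓ]
    [AddCommGroup Ar] [AddCommGroup Br]
    (dAℓ : Aℓ →ₗ[ℤ] Aℓ) (dBℓ : Bℓ →ₗ[ℤ] Bℓ) (dAr : Ar →ₗ[ℤ] Ar) (dBr : Br →ₗ[ℤ] Br)
    (hdAℓ : dAℓ ∘ₗ dAℓ = 0) (hdBℓ : dBℓ ∘ₗ dBℓ = 0)
    (hdAr : dAr ∘ₗ dAr = 0) (hdBr : dBr ∘ₗ dBr = 0)
    -- sign involutions of the left complexes: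
    (σAℓ : Aℓ →ₗ[ℤ] Aℓ) (σBℓ : Bℓ →ₗ[ℤ] Bℓ)
    (hσAℓ : σAℓ ∘ₗ σAℓ = LinearMap.id) (hσBℓ : σBℓ ∘ₗ σBℓ = LinearMap.id)
    (hσdAℓ : σAℓ ∘ₗ dAℓ = -(dAℓ ∘ₗ σAℓ)) (hσdBℓ : σBℓ ∘ₗ dBℓ = -(dBℓ ∘ₗ σBℓ))
    -- the left SDR:
    (fℓ : Aℓ →ₗ[ℤ] Bℓ) (gℓ : Bℓ →ₗ[ℤ] Aℓ) (hℓ : Aℓ →ₗ[ℤ] Aℓ)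
    (hfℓchain : fℓ ∘ₗ dAℓ = dBℓ ∘ₗ fℓ) (hgℓchain : dAℓ ∘ₗ gℓ = gℓ ∘ₗ dBℓ)
    (hfℓσ : σBℓ ∘ₗ fℓ = fℓ ∘ₗ σAℓ) (hgℓσ : σAℓ ∘ₗ gℓ = gℓ ∘ₗ σBℓ)
    (hhℓσ : σAℓ ∘ₗ hℓ = -(hℓ ∘ₗ σAℓ))
    (hfgℓ : fℓ ∘ₗ gℓ = LinearMap.id)
    (hhomℓ : dAℓ ∘ₗ hℓ + hℓ ∘ₗ dAℓ = LinearMap.id - gℓ ∘ₗ fℓ)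
    (hfhℓ : fℓ ∘ₗ hℓ = 0) (hhgℓ : hℓ ∘ₗ gℓ = 0) (hhhℓ : hℓ ∘ₗ hℓ = 0)
    -- the right SDR:
    (fr : Ar →ₗ[ℤ] Br) (gr : Br →ₗ[ℤ] Ar) (hr : Ar →ₗ[ℤ] Ar)
    (hfrchain : fr ∘ₗ dAr = dBr ∘ₗ fr) (hgrchain : dAr ∘ₗ gr = gr ∘ₗ dBr)
    (hfgr : fr ∘ₗ gr = LinearMap.id)
    (hhomr : dAr ∘ₗ hr + hr ∘ₗ dAr = LinearMap.id - gr ∘ₗ fr)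
    (hfhr : fr ∘ₗ hr = 0) (hhgr : hr ∘ₗ gr = 0) (hhhr : hr ∘ₗ hr = 0) :
    let DA : Aℓ ⊗[ℤ] Ar →ₗ[ℤ] Aℓ ⊗[ℤ] Ar :=
      TensorProduct.map dAℓ LinearMap.id + TensorProduct.map σAℓ dAr
    let DB : Bℓ ⊗[ℤ] Br →ₗ[ℤ] Bℓ ⊗[ℤ] Br :=
      TensorProduct.map dBℓ LinearMap.id + TensorProduct.map σBℓ dBr
    let F : Aℓ ⊗[ℤ] Ar →ₗ[ℤ] Bℓ ⊗[ℤ] Br := TensorProduct.map fℓ fr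
    let G : Bℓ ⊗[ℤ] Br →ₗ[ℤ] Aℓ ⊗[ℤ] Ar := TensorProduct.map gℓ gr
    let H : Aℓ ⊗[ℤ] Ar →ₗ[ℤ] Aℓ ⊗[ℤ] Ar :=
      TensorProduct.map hℓ LinearMap.id + TensorProduct.map ((gℓ ∘ₗ fℓ) ∘ₗ σAℓ) hr
    F ∘ₗ DA = DB ∘ₗ F ∧
    DA ∘ₗ G = G ∘ₗ DB ∧
    F ∘ₗ G = LinearMap.id ∧
    DA ∘ₗ H + H ∘ₗ DA = LinearMap.id - G ∘ₗ F ∧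
    F ∘ₗ H = 0 ∧ H ∘ₗ G = 0 ∧ H ∘ₗ H = 0 :=
  sdr_tensor_general dAℓ dBℓ dAr dBr σAℓ σBℓ hσAℓ hσdAℓ fℓ gℓ hℓ hfℓchain hgℓchain hfℓσ hgℓσ hhℓσ
    hfgℓ hhomℓ hfhℓ hhgℓ hhhℓ fr gr hr hfrchain hgrchain hfgr hhomr hfhr hhgr hhhr
end

section
/- (Perturbation of a tensor multiple, left factor.) Let C be a chain complex, F = (f,g,h) : A → B an SDR with side conditions, and δ a perturbation of C with no assumption needed on invertibility: consider the SDR 1_C ⊗ F : C⊗A → C⊗B with homotopy 1⊗h, perturbed by δ⊗1. Then 1 + (δ⊗1)(1⊗h) = 1 + δ⊗h, and the perturbed SDR components equal f̂ = 1⊗f, ĝ = 1⊗g, ĥ = 1⊗h with perturbed differential δ⊗1 on C⊗B; i.e., (1_C⊗F)_{δ⊗1} = 1_{C_δ}⊗F. -/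
/-!
Every correction term of the perturbation lemma is killed by a side condition: the perturbation
`(δ⊗1)(σ⊗h) = δσ⊗h` is annihilated on the left by `1⊗f` (as `fh = 0`) and by `σ⊗h` (as `hh = 0`),
and `(σ⊗h)(δ⊗1) = σδ⊗h` on the right by `1⊗g` (as `hg = 0`). If `a x = 0` then `a (1 + x) = a`, hence
`a (1 + x)⁻¹ = a`, so the perturbed maps are the unperturbed ones, and `fg = 1` gives `δ' = δ⊗1`.
-/

open TensorProduct

def linOfEnd {M : Type*} [AddCommGroup M] (f : Module.End ℤ M) : M →ₗ[ℤ] M := f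

open LinearMap

namespace LinearMap

variable {R M N : Type*} [Semiring R] [AddCommMonoid M] [AddCommMonoid N] [Module R M] [Module R N]

theorem comp_units_inv_eq_of_comp_eq_zero {a : M →ₗ[R] N} {u : (Module.End R M)ˣ}
    {x : Module.End R M} (hu : (u : Module.End R M) = id + x) (hx : a ∘ₗ x = 0) :
    a ∘ₗ ((u⁻¹ : (Module.End R M)ˣ) : Module.End R M) = a := by
  have hau : a ∘ₗ (u : Module.End R M) = a := by rw [hu, comp_add, comp_id, hx, add_zero]
  calc a ∘ₗ ((u⁻¹ : (Module.End R M)ˣ) : Module.End R M)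
      = (a ∘ₗ (u : Module.End R M)) ∘ₗ ((u⁻¹ : (Module.End R M)ˣ) : Module.End R M) := by
        rw [hau]
    _ = a := by rw [comp_assoc, ← Module.End.mul_eq_comp, u.mul_inv, Module.End.one_eq_id, comp_id]

theorem units_inv_comp_eq_of_comp_eq_zero {b : N →ₗ[R] M} {u : (Module.End R M)ˣ}
    {x : Module.End R M} (hu : (u : Module.End R M) = id + x) (hx : x ∘ₗ b = 0) :
    ((u⁻¹ : (Module.End R M)ˣ) : Module.End R M) ∘ₗ b = b := by
  have hub : (u : Module.End R M) ∘ₗ b = b := by rw [hu, add_comp, id_comp, hx, add_zero]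
  calc ((u⁻¹ : (Module.End R M)ˣ) : Module.End R M) ∘ₗ b
      = ((u⁻¹ : (Module.End R M)ˣ) : Module.End R M) ∘ₗ ((u : Module.End R M) ∘ₗ b) := by
        rw [hub]
    _ = b := by rw [← comp_assoc, ← Module.End.mul_eq_comp, u.inv_mul, Module.End.one_eq_id, id_comp]

end LinearMap

namespace TensorProduct

variable {R M₁ M₂ M₃ N₁ N₂ N₃ : Type*} [CommSemiring R]
  [AddCommMonoid M₁] [AddCommMonoid M₂] [AddCommMonoid M₃]
  [AddCommMonoid N₁] [AddCommMonoid N₂] [AddCommMonoid N₃]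
  [Module R M₁] [Module R M₂] [Module R M₃] [Module R N₁] [Module R N₂] [Module R N₃]

theorem map_comp_map_eq_zero_of_right {f₁ : M₁ →ₗ[R] M₂} {f₂ : M₂ →ₗ[R] M₃}
    {g₁ : N₁ →ₗ[R] N₂} {g₂ : N₂ →ₗ[R] N₃} (hg : g₂ ∘ₗ g₁ = 0) :
    map f₂ g₂ ∘ₗ map f₁ g₁ = 0 := by
  rw [← map_comp, hg, map_zero_right]

end TensorProduct

theorem perturbation_tensor_left_general
    {C A B : Type*} [AddCommGroup C] [AddCommGroup A] [AddCommGroup B]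
    (σ : C →ₗ[ℤ] C)
    (δ : C →ₗ[ℤ] C)
    (f : A →ₗ[ℤ] B) (g : B →ₗ[ℤ] A) (h : A →ₗ[ℤ] A)
    (hfg : f ∘ₗ g = LinearMap.id)
    (hfh : f ∘ₗ h = 0) (hhg : h ∘ₗ g = 0) (hhh : h ∘ₗ h = 0)
    (U : (Module.End ℤ (C ⊗[ℤ] A))ˣ)
    (hU : linOfEnd (U : Module.End ℤ (C ⊗[ℤ] A)) =
      LinearMap.id + (TensorProduct.map δ LinearMap.id) ∘ₗ (TensorProduct.map σ h))
    (V : (Module.End ℤ (C ⊗[ℤ] A))ˣ)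
    (hV : linOfEnd (V : Module.End ℤ (C ⊗[ℤ] A)) =
      LinearMap.id + (TensorProduct.map σ h) ∘ₗ (TensorProduct.map δ LinearMap.id)) :
    -- (δ⊗1)(1⊗h) = δ⊗h (with the Koszul sign absorbed into σ):
    (TensorProduct.map δ LinearMap.id) ∘ₗ (TensorProduct.map σ h) =
      TensorProduct.map (δ ∘ₗ σ) h ∧
    -- f̂ = (1⊗f)(1+(δ⊗1)(1⊗h))⁻¹ = 1⊗f:
    (TensorProduct.map (LinearMap.id : C →ₗ[ℤ] C) f) ∘ₗ
        linOfEnd ((U⁻¹ : (Module.End ℤ (C ⊗[ℤ] A))ˣ) : Module.End ℤ (C ⊗[ℤ] A)) =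
      TensorProduct.map LinearMap.id f ∧
    -- ĝ = (1+(1⊗h)(δ⊗1))⁻¹(1⊗g) = 1⊗g:
    linOfEnd ((V⁻¹ : (Module.End ℤ (C ⊗[ℤ] A))ˣ) : Module.End ℤ (C ⊗[ℤ] A)) ∘ₗ
        (TensorProduct.map (LinearMap.id : C →ₗ[ℤ] C) g) =
      TensorProduct.map LinearMap.id g ∧
    -- ĥ = (1⊗h)(1+(δ⊗1)(1⊗h))⁻¹ = 1⊗h:
    (TensorProduct.map σ h) ∘ₗ
        linOfEnd ((U⁻¹ : (Module.End ℤ (C ⊗[ℤ] A))ˣ) : Module.End ℤ (C ⊗[ℤ] A)) =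
      TensorProduct.map σ h ∧
    -- δ' = f̂ (δ⊗1) (1⊗g) = δ⊗1 on C⊗B:
    ((TensorProduct.map (LinearMap.id : C →ₗ[ℤ] C) f) ∘ₗ
        linOfEnd ((U⁻¹ : (Module.End ℤ (C ⊗[ℤ] A))ˣ) : Module.End ℤ (C ⊗[ℤ] A))) ∘ₗ
        ((TensorProduct.map δ LinearMap.id) ∘ₗ (TensorProduct.map (LinearMap.id : C →ₗ[ℤ] C) g)) =
      TensorProduct.map δ LinearMap.id := by
  have hX : map δ id ∘ₗ map σ h = map (δ ∘ₗ σ) h := by rw [← map_comp, id_comp]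
  have hY : map σ h ∘ₗ map δ id = map (σ ∘ₗ δ) h := by rw [← map_comp, comp_id]
  rw [linOfEnd, hX] at hU
  rw [linOfEnd, hY] at hV
  simp only [linOfEnd]
  have hf : map id f ∘ₗ ((U⁻¹ : (Module.End ℤ (C ⊗[ℤ] A))ˣ) : Module.End ℤ (C ⊗[ℤ] A)) =
      map id f :=
    comp_units_inv_eq_of_comp_eq_zero hU (map_comp_map_eq_zero_of_right hfh)
  refine ⟨hX, hf, units_inv_comp_eq_of_comp_eq_zero hV (map_comp_map_eq_zero_of_right hhg),
    comp_units_inv_eq_of_comp_eq_zero hU (map_comp_map_eq_zero_of_right hhh), ?_⟩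
  rw [hf]
  have hδg : map δ id ∘ₗ map id g = map δ g := by rw [← map_comp, comp_id, id_comp]
  have hfδg : map id f ∘ₗ map δ g = map δ (id : B →ₗ[ℤ] B) := by rw [← map_comp, id_comp, hfg]
  exact hδg ▸ hfδg

/-- **Perturbation of a tensor multiple, left factor.** Let `C` be a chain complex
(with sign involution `σ`), `F = (f,g,h) : A → B` an SDR with side conditions, and
`δ` a perturbation of `C`.  Consider the SDR `1_C ⊗ F : C⊗A → C⊗B` with homotopy
`1⊗h` (Koszul: `σ⊗h`) perturbed by `δ⊗1`.  Then
`1 + (δ⊗1)(1⊗h) = 1 + δ⊗h` and the perturbed SDR components are `f̂ = 1⊗f`,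
`ĝ = 1⊗g`, `ĥ = 1⊗h`, with perturbed differential `δ' = δ⊗1` on `C⊗B`;
i.e. `(1_C⊗F)_{δ⊗1} = 1_{C_δ}⊗F`. -/
theorem perturbation_tensor_left
    {C A B : Type*} [AddCommGroup C] [AddCommGroup A] [AddCommGroup B]
    (dC : C →ₗ[ℤ] C) (hdC : dC ∘ₗ dC = 0)
    (σ : C →ₗ[ℤ] C) (hσσ : σ ∘ₗ σ = LinearMap.id) (hσd : σ ∘ₗ dC = -(dC ∘ₗ σ))
    (δ : C →ₗ[ℤ] C) (hδ2 : (dC + δ) ∘ₗ (dC + δ) = 0) (hσδ : σ ∘ₗ δ = -(δ ∘ₗ σ))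
    (dA : A →ₗ[ℤ] A) (dB : B →ₗ[ℤ] B) (hdA : dA ∘ₗ dA = 0) (hdB : dB ∘ₗ dB = 0)
    (f : A →ₗ[ℤ] B) (g : B →ₗ[ℤ] A) (h : A →ₗ[ℤ] A)
    (hfchain : f ∘ₗ dA = dB ∘ₗ f) (hgchain : dA ∘ₗ g = g ∘ₗ dB)
    (hfg : f ∘ₗ g = LinearMap.id)
    (hhom : dA ∘ₗ h + h ∘ₗ dA = LinearMap.id - g ∘ₗ f)
    (hfh : f ∘ₗ h = 0) (hhg : h ∘ₗ g = 0) (hhh : h ∘ₗ h = 0)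
    (U : (Module.End ℤ (C ⊗[ℤ] A))ˣ)
    (hU : linOfEnd (U : Module.End ℤ (C ⊗[ℤ] A)) =
      LinearMap.id + (TensorProduct.map δ LinearMap.id) ∘ₗ (TensorProduct.map σ h))
    (V : (Module.End ℤ (C ⊗[ℤ] A))ˣ)
    (hV : linOfEnd (V : Module.End ℤ (C ⊗[ℤ] A)) =
      LinearMap.id + (TensorProduct.map σ h) ∘ₗ (TensorProduct.map δ LinearMap.id)) :
    -- (δ⊗1)(1⊗h) = δ⊗h (with the Koszul sign absorbed into σ):
    (TensorProduct.map δ LinearMap.id) ∘ₗ (TensorProduct.map σ h) =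
      TensorProduct.map (δ ∘ₗ σ) h ∧
    -- f̂ = (1⊗f)(1+(δ⊗1)(1⊗h))⁻¹ = 1⊗f:
    (TensorProduct.map (LinearMap.id : C →ₗ[ℤ] C) f) ∘ₗ
        linOfEnd ((U⁻¹ : (Module.End ℤ (C ⊗[ℤ] A))ˣ) : Module.End ℤ (C ⊗[ℤ] A)) =
      TensorProduct.map LinearMap.id f ∧
    -- ĝ = (1+(1⊗h)(δ⊗1))⁻¹(1⊗g) = 1⊗g:
    linOfEnd ((V⁻¹ : (Module.End ℤ (C ⊗[ℤ] A))ˣ) : Module.End ℤ (C ⊗[ℤ] A)) ∘ₗ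
        (TensorProduct.map (LinearMap.id : C →ₗ[ℤ] C) g) =
      TensorProduct.map LinearMap.id g ∧
    -- ĥ = (1⊗h)(1+(δ⊗1)(1⊗h))⁻¹ = 1⊗h:
    (TensorProduct.map σ h) ∘ₗ
        linOfEnd ((U⁻¹ : (Module.End ℤ (C ⊗[ℤ] A))ˣ) : Module.End ℤ (C ⊗[ℤ] A)) =
      TensorProduct.map σ h ∧
    -- δ' = f̂ (δ⊗1) (1⊗g) = δ⊗1 on C⊗B:
    ((TensorProduct.map (LinearMap.id : C →ₗ[ℤ] C) f) ∘ₗ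
        linOfEnd ((U⁻¹ : (Module.End ℤ (C ⊗[ℤ] A))ˣ) : Module.End ℤ (C ⊗[ℤ] A))) ∘ₗ
        ((TensorProduct.map δ LinearMap.id) ∘ₗ (TensorProduct.map (LinearMap.id : C →ₗ[ℤ] C) g)) =
      TensorProduct.map δ LinearMap.id :=
  perturbation_tensor_left_general σ δ f g h hfg hfh hhg hhh U hU V hV
end

section
/- Let A be a chain complex of abelian groups, ℤ[δ] the dg-algebra freely generated by an element δ of degree −1 subject to dδ = −δ², and make A a left dg-ℤ[δ]-module via a Maurer–Cartan element δ_A (degree −1 endomorphism with (d+δ_A)² = 0). Let W = ℤ[δ] as a left module but with differential perturbed so that d(1) = −δ. Then evaluation at 1 induces an isomorphism of chain complexes Hom_{ℤ[δ]}(W, A) ≅ A_{δ_A}, where A_{δ_A} is A with differential d + δ_A. -/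
/-- Let `A` be a chain complex of abelian groups (big group `M` with differential
`dA`), made a left dg-`ℤ[δ]`-module via a Maurer–Cartan element `δA`
(`(dA+δA)² = 0`, where `ℤ[δ]` is generated by `δ` of degree `-1` with `dδ = -δ²`),
and let `W = ℤ[δ]` with differential perturbed so that `d(1) = -δ`.  A degree-`n`
`ℤ[δ]`-module homomorphism `W → A` is a sequence `a : ℕ → M`, `a m = φ(δᵐ)`, with
`a (m+1) = (-1)ⁿ • δA (a m)`; its Hom-complex differential is
`(Dφ)(δᵐ) = dA (a m) + (-1)ⁿ • a (m+1)` for `m` even and `dA (a m)` for `m` odd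
(since `d_W δᵐ = -δ^{m+1}` for even `m` and `0` for odd `m`).  Then `D` is
well-defined (lands in degree-`(n-1)` module homomorphisms), and evaluation at `1`
is an isomorphism of chain complexes `Hom_{ℤ[δ]}(W, A) ≅ A_{δA}`: it is bijective in
each degree and intertwines `D` with the perturbed differential `dA + δA`. -/
theorem hom_from_perturbed_module_iso
    {M : Type*} [AddCommGroup M]
    (dA δA : AddMonoid.End M) (hdA2 : dA * dA = 0)
    (hδ2 : (dA + δA) * (dA + δA) = 0) (n : ℤ) :
    -- evaluation at 1 is bijective on degree-n module homomorphisms W → A: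
    Function.Bijective
      (fun a : {a : ℕ → M // ∀ m : ℕ, a (m + 1) = ((Int.negOnePow n : ℤˣ) : ℤ) • δA (a m)} =>
        a.1 0) ∧
    -- D is well-defined: D of a degree-n module hom is a degree-(n-1) module hom:
    (∀ a : ℕ → M, (∀ m : ℕ, a (m + 1) = ((Int.negOnePow n : ℤˣ) : ℤ) • δA (a m)) →
      ∀ m : ℕ,
        (dA (a (m + 1)) + (if Even (m + 1) then ((Int.negOnePow n : ℤˣ) : ℤ) • a (m + 2) else 0)) =
          ((Int.negOnePow (n - 1) : ℤˣ) : ℤ) •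
            δA (dA (a m) + (if Even m then ((Int.negOnePow n : ℤˣ) : ℤ) • a (m + 1) else 0))) ∧
    -- evaluation at 1 intertwines D with the perturbed differential dA + δA:
    (∀ a : ℕ → M, (∀ m : ℕ, a (m + 1) = ((Int.negOnePow n : ℤˣ) : ℤ) • δA (a m)) →
      dA (a 0) + ((Int.negOnePow n : ℤˣ) : ℤ) • a 1 = (dA + δA) (a 0)) := by

  have hεε : ((Int.negOnePow n : ℤˣ) : ℤ) * ((Int.negOnePow n : ℤˣ) : ℤ) = 1 := by
    rw [← Units.val_mul, Int.units_mul_self, Units.val_one]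
  have hsub : ((Int.negOnePow (n - 1) : ℤˣ) : ℤ) = -((Int.negOnePow n : ℤˣ) : ℤ) := by
    have := Int.negOnePow_succ (n - 1)
    rw [sub_add_cancel] at this
    rw [this]; simp
  set ε : ℤ := ((Int.negOnePow n : ℤˣ) : ℤ) with hε
  -- key algebraic identity
  have key : ∀ x : M, dA (δA x) + δA (dA x) + δA (δA x) = 0 := by
    intro x
    have addap : ∀ (f g : AddMonoid.End M) (y : M), (f + g) y = f y + g y := fun _ _ _ => rfl
    have h := congrArg (fun f : AddMonoid.End M => f x) hδ2
    simp only [AddMonoid.End.coe_mul, Function.comp_apply, addap, map_add,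
      AddMonoid.End.zero_apply] at h
    have h0 : dA (dA x) = 0 := by
      have := congrArg (fun f : AddMonoid.End M => f x) hdA2
      simpa [AddMonoid.End.coe_mul] using this
    rw [h0] at h
    rw [← h]; abel
  refine ⟨⟨?_, ?_⟩, ?_, ?_⟩
  · -- injective
    rintro ⟨a, ha⟩ ⟨b, hb⟩ h
    simp only at h
    have : ∀ m, a m = b m := by
      intro m
      induction m with
      | zero => exact h
      | succ k ih => rw [ha k, hb k, ih]
    exact Subtype.ext (funext this)
  · -- surjective
    intro x
    exact ⟨⟨fun m => (fun y => ε • δA y)^[m] x,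
      fun m => Function.iterate_succ_apply' (fun y => ε • δA y) m x⟩, rfl⟩
  · -- D well-defined
    intro a ha m
    rcases Nat.even_or_odd m with hm | hm
    · have h1 : ¬ Even (m + 1) := by simpa [Nat.even_add_one] using hm
      rw [if_pos hm, if_neg h1, add_zero, hsub, ha m]
      rw [map_zsmul, map_add, map_zsmul, map_zsmul, smul_smul, hεε, one_smul]
      have k1 : dA (δA (a m)) + (δA (dA (a m)) + δA (δA (a m))) = 0 := by
        rw [← key (a m)]; abel
      rw [eq_neg_of_add_eq_zero_left k1, neg_smul, smul_neg]
    · have h1 : Even (m + 1) := by simpa [Nat.even_add_one, Nat.not_even_iff_odd] using hm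
      rw [if_pos h1, if_neg (by simpa [Nat.not_even_iff_odd] using hm), add_zero, hsub,
        ha (m + 1), ha m]
      rw [map_zsmul, map_zsmul]
      simp only [smul_smul]
      rw [show ε * (ε * ε) = ε by rw [hεε, mul_one], ← smul_add]
      have k2 : dA (δA (a m)) + δA (δA (a m)) + δA (dA (a m)) = 0 := by
        rw [← key (a m)]; abel
      rw [eq_neg_of_add_eq_zero_left k2, neg_smul, smul_neg]
  · intro a ha
    rw [ha 0, smul_smul, hεε, one_smul]
    rfl
end
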